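/- arXiv:2010.08794 — 2 statements merged into one kernel-verified Lean document; each statement's English description precedes it below -/
import Mathlib

section
/- Consider the dynamical system χ' = g(χ) on ℝ^m with g continuously differentiable and globally Lipschitz, output v = θ(χ) with θ continuously differentiable. Suppose that for some ε > 0 and N ∈ ℕ, for every trigonometric polynomial σ(t) = α + Σ_{n=1}^N (βⁿ sin(nt) + γⁿ cos(nt)) with |(α, β¹, γ¹, …, βᴺ, γᴺ)| < ε, there exists an initial condition χ₀ ∈ ℝ^m such that the solution χ(t) with χ(0) = χ₀ satisfies θ(χ(t)) = σ(t) for all t ≥ 0. Then m ≥ 2N + 1. -/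
open Real Finset

/-- The trigonometric polynomial with coefficients `(α, β, γ)`. -/
noncomputable def trigPoly (N : ℕ) (α : ℝ) (β γ : Fin N → ℝ) : ℝ → ℝ :=
  fun t => α + ∑ n : Fin N, (β n * Real.sin ((n + 1 : ℕ) * t) + γ n * Real.cos ((n + 1 : ℕ) * t))

/-- The Euclidean norm of the coefficient vector `(α, β¹, γ¹, …, βᴺ, γᴺ)`. -/
noncomputable def coeffNorm (N : ℕ) (α : ℝ) (β γ : Fin N → ℝ) : ℝ :=
  Real.sqrt (α ^ 2 + ∑ n : Fin N, (β n ^ 2 + γ n ^ 2))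

/-!
Let `ℓ(x)` be the vector of the first `2N + 1` Fourier coefficients on `[0, 2π]` of the output
`t ↦ θ(χ(t))` of the solution with `χ(0) = x`, defined on the set of initial conditions admitting a
global solution. By Gronwall's inequality and since `θ` is locally Lipschitz, `ℓ` is locally
Lipschitz, so its image has Hausdorff dimension at most `m`. By orthogonality of the trigonometric
system `ℓ` inverts `trigPoly`, so by hypothesis its image contains a ball of `ℝ^{2N+1}`, whose
Hausdorff dimension is `2N + 1`.
-/

open Set Metric intervalIntegral
open scoped NNReal Topology

lemma integral_cos_int_mul (k : ℤ) :
    ∫ t in (0)..(2 * π), cos (k * t) = if k = 0 then 2 * π else 0 := by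
  split_ifs with hk
  · simp [hk]
  · have hk' : (k : ℝ) ≠ 0 := Int.cast_ne_zero.mpr hk
    have : sin (k * (2 * π)) = 0 := by
      rw [show (k : ℝ) * (2 * π) = ((2 * k : ℤ) : ℝ) * π by push_cast; ring]
      exact sin_int_mul_pi _
    simp [integral_comp_mul_left cos hk', this]

lemma integral_sin_int_mul (k : ℤ) : ∫ t in (0)..(2 * π), sin (k * t) = 0 := by
  rcases eq_or_ne k 0 with hk | hk
  · simp [hk]
  · have hk' : (k : ℝ) ≠ 0 := Int.cast_ne_zero.mpr hk
    simp [integral_comp_mul_left sin hk', cos_int_mul_two_pi]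

lemma integral_cos_nat_mul {a : ℕ} (ha : 0 < a) : ∫ t in (0)..(2 * π), cos (a * t) = 0 := by
  simpa [ha.ne'] using integral_cos_int_mul a

lemma integral_sin_nat_mul (a : ℕ) : ∫ t in (0)..(2 * π), sin (a * t) = 0 := by
  simpa using integral_sin_int_mul a

lemma integral_sin_mul_sin {a b : ℕ} (ha : 0 < a) (hb : 0 < b) :
    ∫ t in (0)..(2 * π), sin (a * t) * sin (b * t) = if a = b then π else 0 := by
  have h (t : ℝ) : sin (a * t) * sin (b * t)
      = (cos (((a - b : ℤ) : ℝ) * t) - cos (((a + b : ℤ) : ℝ) * t)) / 2 := by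
    push_cast; rw [sub_mul, add_mul, ← two_mul_sin_mul_sin]; ring
  simp_rw [h]
  rw [integral_div, integral_sub ((by fun_prop : Continuous _).intervalIntegrable _ _)
    ((by fun_prop : Continuous _).intervalIntegrable _ _), integral_cos_int_mul,
    integral_cos_int_mul]
  split_ifs <;> first | omega | ring

lemma integral_cos_mul_cos {a b : ℕ} (ha : 0 < a) (hb : 0 < b) :
    ∫ t in (0)..(2 * π), cos (a * t) * cos (b * t) = if a = b then π else 0 := by
  have h (t : ℝ) : cos (a * t) * cos (b * t)
      = (cos (((a - b : ℤ) : ℝ) * t) + cos (((a + b : ℤ) : ℝ) * t)) / 2 := by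
    push_cast; rw [sub_mul, add_mul, ← two_mul_cos_mul_cos]; ring
  simp_rw [h]
  rw [integral_div, integral_add ((by fun_prop : Continuous _).intervalIntegrable _ _)
    ((by fun_prop : Continuous _).intervalIntegrable _ _), integral_cos_int_mul,
    integral_cos_int_mul]
  split_ifs <;> first | omega | ring

lemma integral_sin_mul_cos (a b : ℕ) :
    ∫ t in (0)..(2 * π), sin (a * t) * cos (b * t) = 0 := by
  have h (t : ℝ) : sin (a * t) * cos (b * t)
      = (sin (((a - b : ℤ) : ℝ) * t) + sin (((a + b : ℤ) : ℝ) * t)) / 2 := by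
    push_cast; rw [sub_mul, add_mul, ← two_mul_sin_mul_cos]; ring
  simp_rw [h]
  rw [integral_div, integral_add ((by fun_prop : Continuous _).intervalIntegrable _ _)
    ((by fun_prop : Continuous _).intervalIntegrable _ _), integral_sin_int_mul,
    integral_sin_int_mul]
  simp

noncomputable def fourierCoeffs (N : ℕ) (f : ℝ → ℝ) : ℝ × (Fin N → ℝ) × (Fin N → ℝ) :=
  ((2 * π)⁻¹ * ∫ t in (0)..(2 * π), f t,
    fun n => π⁻¹ * ∫ t in (0)..(2 * π), f t * sin ((n + 1 : ℕ) * t),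
    fun n => π⁻¹ * ∫ t in (0)..(2 * π), f t * cos ((n + 1 : ℕ) * t))

lemma integral_trigPoly_mul (N : ℕ) (α : ℝ) (β γ : Fin N → ℝ) {f : ℝ → ℝ} (hf : Continuous f) :
    ∫ t in (0)..(2 * π), trigPoly N α β γ t * f t
      = α * (∫ t in (0)..(2 * π), f t) + ∑ n : Fin N,
        (β n * (∫ t in (0)..(2 * π), sin ((n + 1 : ℕ) * t) * f t)
          + γ n * ∫ t in (0)..(2 * π), cos ((n + 1 : ℕ) * t) * f t) := by
  simp only [trigPoly, add_mul, Finset.sum_mul, mul_assoc]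
  rw [integral_add ((by fun_prop : Continuous _).intervalIntegrable _ _)
      ((by fun_prop : Continuous _).intervalIntegrable _ _),
    integral_finsetSum fun n _ => (by fun_prop : Continuous _).intervalIntegrable _ _,
    integral_const_mul]
  congr 1
  refine Finset.sum_congr rfl fun n _ => ?_
  rw [integral_add ((by fun_prop : Continuous _).intervalIntegrable _ _)
      ((by fun_prop : Continuous _).intervalIntegrable _ _),
    integral_const_mul, integral_const_mul]

lemma fourierCoeffs_trigPoly (N : ℕ) (α : ℝ) (β γ : Fin N → ℝ) :
    fourierCoeffs N (trigPoly N α β γ) = (α, β, γ) := by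
  have hπ : π ≠ 0 := pi_ne_zero
  have hpos (n : Fin N) : 0 < (n + 1 : ℕ) := Nat.succ_pos _
  refine Prod.ext ?_ (Prod.ext (funext fun k => ?_) (funext fun k => ?_))
  · have h := integral_trigPoly_mul N α β γ continuous_const (f := fun _ => 1)
    simp only [mul_one, integral_sin_nat_mul, integral_cos_nat_mul (hpos _), integral_const,
      sub_zero, smul_eq_mul, mul_zero, add_zero, sum_const_zero] at h
    simp only [fourierCoeffs, h]
    field_simp
  · simp only [fourierCoeffs]
    rw [integral_trigPoly_mul N α β γ (by fun_prop)]
    simp only [integral_sin_nat_mul, integral_sin_mul_sin (hpos _) (hpos k),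
      mul_comm (cos _) (sin _), integral_sin_mul_cos, mul_zero, add_zero, zero_add,
      Nat.add_right_cancel_iff, Fin.val_inj, mul_ite, sum_ite_eq', Finset.mem_univ, ↓reduceIte]
    field_simp
  · simp only [fourierCoeffs]
    rw [integral_trigPoly_mul N α β γ (by fun_prop)]
    simp only [integral_cos_nat_mul (hpos k), integral_cos_mul_cos (hpos _) (hpos k),
      integral_sin_mul_cos, mul_zero, zero_add, Nat.add_right_cancel_iff, Fin.val_inj, mul_ite,
      sum_ite_eq', Finset.mem_univ, ↓reduceIte]
    field_simp

lemma fourierCoeffs_congr (N : ℕ) {f h : ℝ → ℝ} (hfh : EqOn f h (Icc 0 (2 * π))) :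
    fourierCoeffs N f = fourierCoeffs N h := by
  rw [← uIcc_of_le two_pi_pos.le] at hfh
  have hmul (b : ℝ → ℝ) : ∫ t in (0)..(2 * π), f t * b t = ∫ t in (0)..(2 * π), h t * b t :=
    integral_congr fun t ht => by simp only [hfh ht]
  simp only [fourierCoeffs, integral_congr hfh, hmul]

lemma fourierCoeffs_sub (N : ℕ) {f h : ℝ → ℝ} (hf : Continuous f) (hh : Continuous h) :
    fourierCoeffs N (f - h) = fourierCoeffs N f - fourierCoeffs N h := by
  have hmul {b : ℝ → ℝ} (hb : Continuous b) :
      ∫ t in (0)..(2 * π), (f t - h t) * b t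
        = (∫ t in (0)..(2 * π), f t * b t) - ∫ t in (0)..(2 * π), h t * b t := by
    simp only [sub_mul]
    exact integral_sub ((hf.mul hb).intervalIntegrable _ _) ((hh.mul hb).intervalIntegrable _ _)
  refine Prod.ext ?_ (Prod.ext (funext fun n => ?_) (funext fun n => ?_)) <;>
    simp only [fourierCoeffs, Prod.fst_sub, Prod.snd_sub, Pi.sub_apply]
  · simpa [mul_sub] using congrArg ((2 * π)⁻¹ * ·) (hmul continuous_const (b := fun _ => 1))
  · rw [hmul (by fun_prop), mul_sub]
  · rw [hmul (by fun_prop), mul_sub]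

lemma abs_integral_mul_le {u b : ℝ → ℝ} {C : ℝ} (hu : ∀ t ∈ Icc 0 (2 * π), |u t| ≤ C)
    (hb : ∀ t, |b t| ≤ 1) : |∫ t in (0)..(2 * π), u t * b t| ≤ C * (2 * π) := by
  have hC : 0 ≤ C := (abs_nonneg _).trans (hu 0 ⟨le_rfl, two_pi_pos.le⟩)
  have := norm_integral_le_of_norm_le_const (a := 0) (b := 2 * π) (f := fun t => u t * b t)
    fun t ht => by
      rw [uIoc_of_le two_pi_pos.le] at ht
      rw [Real.norm_eq_abs, abs_mul]
      exact (mul_le_mul (hu t (Ioc_subset_Icc_self ht)) (hb t) (abs_nonneg _) hC).trans_eq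
        (mul_one C)
  simpa [abs_of_pos two_pi_pos] using this

lemma norm_fourierCoeffs_le (N : ℕ) {u : ℝ → ℝ} {C : ℝ} (hu : ∀ t ∈ Icc 0 (2 * π), |u t| ≤ C) :
    ‖fourierCoeffs N u‖ ≤ 2 * C := by
  have hC : 0 ≤ C := (abs_nonneg _).trans (hu 0 ⟨le_rfl, two_pi_pos.le⟩)
  have hcoeff {c : ℝ} (hc : π ≤ c) {b : ℝ → ℝ} (hb : ∀ t, |b t| ≤ 1) :
      |c⁻¹ * ∫ t in (0)..(2 * π), u t * b t| ≤ 2 * C := by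
    have hc0 : 0 < c := pi_pos.trans_le hc
    rw [abs_mul, abs_inv, abs_of_pos hc0, inv_mul_le_iff₀ hc0]
    calc _ ≤ C * (2 * π) := abs_integral_mul_le hu hb
      _ ≤ c * (2 * C) := by nlinarith
  simp only [fourierCoeffs, norm_prod_le_iff, pi_norm_le_iff_of_nonneg (by positivity : 0 ≤ 2 * C),
    Real.norm_eq_abs]
  refine ⟨?_, fun n => ?_, fun n => ?_⟩
  · simpa using hcoeff (c := 2 * π) (by linarith [pi_pos]) (b := fun _ => 1) (by simp)
  · exact hcoeff le_rfl fun t => abs_sin_le_one _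
  · exact hcoeff le_rfl fun t => abs_cos_le_one _

lemma dist_fourierCoeffs_le (N : ℕ) {f h : ℝ → ℝ} (hf : Continuous f) (hh : Continuous h) {C : ℝ}
    (hfh : ∀ t ∈ Icc 0 (2 * π), |f t - h t| ≤ C) :
    dist (fourierCoeffs N f) (fourierCoeffs N h) ≤ 2 * C := by
  rw [dist_eq_norm, ← fourierCoeffs_sub N hf hh]
  exact norm_fourierCoeffs_le N hfh

lemma coeffNorm_le (N : ℕ) (α : ℝ) (β γ : Fin N → ℝ) :
    coeffNorm N α β γ ≤ (2 * N + 1) * ‖(α, β, γ)‖ := by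
  set r := ‖(α, β, γ)‖
  have hsq {x : ℝ} (hx : ‖x‖ ≤ r) : x ^ 2 ≤ r ^ 2 := by
    simpa only [Real.norm_eq_abs, sq_abs] using pow_le_pow_left₀ (norm_nonneg x) hx 2
  have hβγ (n : Fin N) : β n ^ 2 + γ n ^ 2 ≤ 2 * r ^ 2 := by
    have h := norm_snd_le (α, β, γ)
    linarith [hsq ((norm_le_pi_norm β n).trans ((norm_fst_le (β, γ)).trans h)),
      hsq ((norm_le_pi_norm γ n).trans ((norm_snd_le (β, γ)).trans h))]
  have hsum : α ^ 2 + ∑ n, (β n ^ 2 + γ n ^ 2) ≤ ((2 * N + 1) * r) ^ 2 := by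
    have hN : (2 * N + 1 : ℝ) ≤ (2 * N + 1) ^ 2 := by nlinarith [(N.cast_nonneg : (0 : ℝ) ≤ N)]
    have := Finset.sum_le_sum fun n (_ : n ∈ Finset.univ) => hβγ n
    rw [sum_const, card_univ, Fintype.card_fin, nsmul_eq_mul] at this
    nlinarith [hsq (norm_fst_le (α, β, γ)), mul_le_mul_of_nonneg_right hN (sq_nonneg r)]
  rw [coeffNorm, ← Real.sqrt_sq (by positivity : 0 ≤ (2 * N + 1) * r)]
  exact Real.sqrt_le_sqrt hsum

section Flow

variable {E : Type*} [NormedAddCommGroup E] [NormedSpace ℝ E] {g : E → E} {L : ℝ≥0}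

def globalInitSet (g : E → E) : Set E :=
  {x | ∃ χ : ℝ → E, (∀ t, HasDerivAt χ (g (χ t)) t) ∧ χ 0 = x}

/-- Outside `globalInitSet g` this is an arbitrary path. -/
noncomputable def trajectory (g : E → E) (x : E) : ℝ → E :=
  Classical.epsilon fun χ : ℝ → E => (∀ t, HasDerivAt χ (g (χ t)) t) ∧ χ 0 = x

lemma trajectory_spec {x : E} (hx : x ∈ globalInitSet g) :
    (∀ t, HasDerivAt (trajectory g x) (g (trajectory g x t)) t) ∧ trajectory g x 0 = x :=
  Classical.epsilon_spec hx

lemma continuous_trajectory {x : E} (hx : x ∈ globalInitSet g) : Continuous (trajectory g x) :=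
  continuous_iff_continuousAt.2 fun t => ((trajectory_spec hx).1 t).continuousAt

lemma dist_le_of_hasDerivAt_of_lipschitzWith (hg : LipschitzWith L g) {χ ψ : ℝ → E}
    (hχ : ∀ t, HasDerivAt χ (g (χ t)) t) (hψ : ∀ t, HasDerivAt ψ (g (ψ t)) t) {T t : ℝ}
    (ht : t ∈ Icc 0 T) : dist (χ t) (ψ t) ≤ dist (χ 0) (ψ 0) * exp (L * T) := by
  have := dist_le_of_trajectories_ODE (v := fun _ => g) (fun _ => hg)
    (fun s _ => (hχ s).continuousAt.continuousWithinAt) (fun s _ => (hχ s).hasDerivWithinAt)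
    (fun s _ => (hψ s).continuousAt.continuousWithinAt) (fun s _ => (hψ s).hasDerivWithinAt)
    le_rfl t ht
  refine this.trans (mul_le_mul_of_nonneg_left (exp_le_exp.2 ?_) dist_nonneg)
  exact mul_le_mul_of_nonneg_left (by linarith [ht.1, ht.2]) L.coe_nonneg

lemma trajectory_eqOn (hg : LipschitzWith L g) {χ : ℝ → E}
    (hχ : ∀ t, HasDerivAt χ (g (χ t)) t) : EqOn (trajectory g (χ 0)) χ (Ici 0) := by
  intro t ht
  have hx := trajectory_spec (g := g) ⟨χ, hχ, rfl⟩
  have := dist_le_of_hasDerivAt_of_lipschitzWith hg hx.1 hχ (T := t) ⟨ht, le_rfl⟩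
  rwa [hx.2, dist_self, zero_mul, dist_le_zero] at this

lemma dist_trajectory_le (hg : LipschitzWith L g) {x y : E} (hx : x ∈ globalInitSet g)
    (hy : y ∈ globalInitSet g) {T t : ℝ} (ht : t ∈ Icc 0 T) :
    dist (trajectory g x t) (trajectory g y t) ≤ dist x y * exp (L * T) := by
  have := dist_le_of_hasDerivAt_of_lipschitzWith hg (trajectory_spec hx).1
    (trajectory_spec hy).1 ht
  rwa [(trajectory_spec hx).2, (trajectory_spec hy).2] at this

lemma locallyLipschitzOn_fourierCoeffs_trajectory [ProperSpace E] (hg : LipschitzWith L g)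
    {θ : E → ℝ} (hθ : LocallyLipschitz θ) (N : ℕ) :
    LocallyLipschitzOn (globalInitSet g)
      fun x => fourierCoeffs N fun t => θ (trajectory g x t) := by
  intro x₀ hx₀
  set e := exp (L * (2 * π))
  obtain ⟨M, hM⟩ := (isCompact_Icc (a := 0) (b := 2 * π)).exists_bound_of_continuousOn
    (continuous_trajectory hx₀).continuousOn
  set U := globalInitSet g ∩ closedBall x₀ 1
  have hU : ∀ x ∈ U, ∀ t ∈ Icc 0 (2 * π), trajectory g x t ∈ closedBall 0 (M + e) := by
    intro x hx t ht
    rw [mem_closedBall_zero_iff]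
    have hdist := (dist_trajectory_le hg hx.1 hx₀ ht).trans
      (mul_le_mul_of_nonneg_right hx.2 (exp_pos _).le)
    linarith [norm_le_norm_add_norm_sub' (trajectory g x t) (trajectory g x₀ t), hM t ht,
      dist_eq_norm (trajectory g x t) (trajectory g x₀ t)]
  obtain ⟨K, hK⟩ := hθ.locallyLipschitzOn.exists_lipschitzOnWith_of_compact
    (isCompact_closedBall (0 : E) (M + e))
  refine ⟨_, U, inter_mem_nhdsWithin _ (closedBall_mem_nhds x₀ one_pos),
    LipschitzOnWith.of_dist_le' (K := 2 * (K * e)) fun x hx y hy => ?_⟩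
  refine (dist_fourierCoeffs_le N (hθ.continuous.comp (continuous_trajectory hx.1))
    (hθ.continuous.comp (continuous_trajectory hy.1)) fun t ht => ?_).trans_eq
    (mul_assoc _ _ _).symm
  rw [← Real.dist_eq]
  calc _ ≤ K * dist (trajectory g x t) (trajectory g y t) :=
        hK.dist_le_mul _ (hU x hx t ht) _ (hU y hy t ht)
    _ ≤ K * (dist x y * e) :=
        mul_le_mul_of_nonneg_left (dist_trajectory_le hg hx.1 hy.1 ht) K.coe_nonneg
    _ = K * e * dist x y := by ring

end Flow

theorem finrank_le_of_locallyLipschitzOn_of_image_mem_nhds {E F : Type*}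
    [NormedAddCommGroup E] [NormedSpace ℝ E] [FiniteDimensional ℝ E]
    [NormedAddCommGroup F] [NormedSpace ℝ F] [FiniteDimensional ℝ F]
    {f : E → F} {s : Set E} (hf : LocallyLipschitzOn s f) {y : F} (hy : f '' s ∈ 𝓝 y) :
    Module.finrank ℝ F ≤ Module.finrank ℝ E := by
  have h := (dimH_image_le_of_locally_lipschitzOn fun x hx => hf hx).trans
    ((dimH_mono (subset_univ s)).trans_eq (dimH_univ_eq_finrank E))
  rw [dimH_of_mem_nhds hy] at h
  exact_mod_cast h

theorem stmt_6_general (m : ℕ) (g : EuclideanSpace ℝ (Fin m) → EuclideanSpace ℝ (Fin m))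
    (L : NNReal) (hgL : LipschitzWith L g)
    (θ : EuclideanSpace ℝ (Fin m) → ℝ) (hθ : ContDiff ℝ 1 θ)
    (ε : ℝ) (hε : 0 < ε) (N : ℕ)
    (hrepr : ∀ (α : ℝ) (β γ : Fin N → ℝ), coeffNorm N α β γ < ε →
      ∃ χ : ℝ → EuclideanSpace ℝ (Fin m),
        (∀ t : ℝ, HasDerivAt χ (g (χ t)) t) ∧
        ∀ t : ℝ, 0 ≤ t → θ (χ t) = trigPoly N α β γ t) :
    2 * N + 1 ≤ m := by
  set F := fun x => fourierCoeffs N fun t => θ (trajectory g x t)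
  have hball : ball 0 (ε / (2 * N + 1)) ⊆ F '' globalInitSet g := by
    rintro ⟨α, β, γ⟩ hv
    rw [mem_ball_zero_iff, lt_div_iff₀' (by positivity)] at hv
    obtain ⟨χ, hχ, hθχ⟩ := hrepr α β γ ((coeffNorm_le N α β γ).trans_lt hv)
    refine ⟨χ 0, ⟨χ, hχ, rfl⟩, ?_⟩
    calc F (χ 0) = fourierCoeffs N (trigPoly N α β γ) := fourierCoeffs_congr N fun t ht => by
          rw [trajectory_eqOn hgL hχ ht.1, hθχ t ht.1]
      _ = (α, β, γ) := fourierCoeffs_trigPoly N α β γ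
  have hdim := finrank_le_of_locallyLipschitzOn_of_image_mem_nhds
    (locallyLipschitzOn_fourierCoeffs_trajectory hgL hθ.locallyLipschitz N)
    (Filter.mem_of_superset (ball_mem_nhds 0 (by positivity)) hball)
  simpa [Module.finrank_prod, Module.finrank_pi, two_mul, add_comm] using hdim

/-- If the smooth finite-dimensional autonomous system `χ' = g(χ)` on `ℝ^m` with output
`v = θ(χ)` can reproduce, from suitable initial conditions, every trigonometric polynomial of
degree `N` with coefficient vector of norm `< ε`, then `m ≥ 2N + 1`. -/
theorem stmt_6 (m : ℕ) (g : EuclideanSpace ℝ (Fin m) → EuclideanSpace ℝ (Fin m))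
    (hg : ContDiff ℝ 1 g) (L : NNReal) (hgL : LipschitzWith L g)
    (θ : EuclideanSpace ℝ (Fin m) → ℝ) (hθ : ContDiff ℝ 1 θ)
    (ε : ℝ) (hε : 0 < ε) (N : ℕ)
    (hrepr : ∀ (α : ℝ) (β γ : Fin N → ℝ), coeffNorm N α β γ < ε →
      ∃ χ : ℝ → EuclideanSpace ℝ (Fin m),
        (∀ t : ℝ, HasDerivAt χ (g (χ t)) t) ∧
        ∀ t : ℝ, 0 ≤ t → θ (χ t) = trigPoly N α β γ t) :
    2 * N + 1 ≤ m :=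
  stmt_6_general m g L hgL θ hθ ε hε N hrepr
end

section
/- Let φ : ℝ × ℝ^n → ℝ^n be a continuous flow map (φ(0,x) = x and φ(s+t, x) = φ(t, φ(s,x))), and suppose x : [0,∞) → ℝ^n is a bounded trajectory, i.e. x(t) = φ(t − s, x(s)) for all 0 ≤ s ≤ t, satisfying lim_{t→∞} |x(t + T) − x(t)| = 0 for some T > 0. Let y : ℝ → ℝ^n be a complete trajectory of φ contained in the ω-limit set of x, i.e., there exist times t_k → ∞ with x(t_k) → y(0). Then y is T-periodic: y(t + T) = y(t) for all t. -/
/-!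
It suffices to show `y T = y 0`: the flow then carries this identity along the whole orbit of
`y 0`. Along the times `tₖ` with `x tₖ → y 0`, continuity of `φ T` gives `x (tₖ + T) → y T`,
while `‖x (tₖ + T) - x tₖ‖ → 0`; the two limits therefore agree.
-/

open Filter Topology

lemma tendsto_trajectory_add_of_tendsto {ι X : Type*} [TopologicalSpace X] {l : Filter ι}
    {φ : ℝ → X → X} {x : ℝ → X} (hx : ∀ s t : ℝ, 0 ≤ s → s ≤ t → x t = φ (t - s) (x s))
    {s : ℝ} (hs : 0 ≤ s) (hφs : Continuous (φ s)) {u : ι → ℝ} (hu : Tendsto u l atTop) {p : X}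
    (hxu : Tendsto (fun i => x (u i)) l (𝓝 p)) :
    Tendsto (fun i => x (u i + s)) l (𝓝 (φ s p)) := by
  refine ((hφs.tendsto p).comp hxu).congr' ?_
  filter_upwards [hu.eventually_ge_atTop 0] with i hi
  simp [hx (u i) (u i + s) hi (by linarith)]

lemma eq_of_tendsto_of_tendsto_norm_sub {ι E : Type*} [NormedAddCommGroup E] {l : Filter ι}
    [l.NeBot] {f g : ι → E} {a b : E} (hf : Tendsto f l (𝓝 a)) (hg : Tendsto g l (𝓝 b))
    (hfg : Tendsto (fun i => ‖f i - g i‖) l (𝓝 0)) : a = b := by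
  have hab : ‖a - b‖ = 0 := tendsto_nhds_unique (hf.sub hg).norm hfg
  rwa [norm_eq_zero, sub_eq_zero] at hab

lemma orbit_add_eq_of_orbit_eq {X : Type*} {φ : ℝ → X → X}
    (hφadd : ∀ s t x, φ (s + t) x = φ t (φ s x)) {y : ℝ → X} (hy : ∀ t, y t = φ t (y 0))
    {T : ℝ} (hT : y T = y 0) (t : ℝ) : y (t + T) = y t := by
  rw [hy, add_comm, hφadd, ← hy T, hT, ← hy]

theorem stmt_15_general (n : ℕ) (φ : ℝ → EuclideanSpace ℝ (Fin n) → EuclideanSpace ℝ (Fin n))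
    (hφcont : Continuous (fun p : ℝ × EuclideanSpace ℝ (Fin n) => φ p.1 p.2))
    (hφadd : ∀ s t x, φ (s + t) x = φ t (φ s x))
    (x : ℝ → EuclideanSpace ℝ (Fin n))
    (hxtraj : ∀ s t : ℝ, 0 ≤ s → s ≤ t → x t = φ (t - s) (x s))
    (T : ℝ) (hT : 0 < T)
    (hper : Tendsto (fun t => ‖x (t + T) - x t‖) atTop (nhds 0))
    (y : ℝ → EuclideanSpace ℝ (Fin n))
    (hy : ∀ t : ℝ, y t = φ t (y 0))
    (hω : ∃ u : ℕ → ℝ, Tendsto u atTop atTop ∧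
      Tendsto (fun k => x (u k)) atTop (nhds (y 0))) :
    ∀ t : ℝ, y (t + T) = y t := by
  obtain ⟨u, hu, hxu⟩ := hω
  have hxuT : Tendsto (fun k => x (u k + T)) atTop (𝓝 (y T)) := by
    rw [hy T]
    exact tendsto_trajectory_add_of_tendsto hxtraj hT.le
      (hφcont.comp (Continuous.prodMk_right T)) hu hxu
  have hyT : y T = y 0 :=
    eq_of_tendsto_of_tendsto_norm_sub hxuT hxu (hper.comp hu)
  exact orbit_add_eq_of_orbit_eq hφadd hy hyT

/-- Complete trajectories of a continuous flow contained in the ω-limit set of a bounded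
trajectory that is asymptotically `T`-periodic are themselves `T`-periodic. -/
theorem stmt_15 (n : ℕ) (φ : ℝ → EuclideanSpace ℝ (Fin n) → EuclideanSpace ℝ (Fin n))
    (hφcont : Continuous (fun p : ℝ × EuclideanSpace ℝ (Fin n) => φ p.1 p.2))
    (hφ0 : ∀ x, φ 0 x = x)
    (hφadd : ∀ s t x, φ (s + t) x = φ t (φ s x))
    (x : ℝ → EuclideanSpace ℝ (Fin n))
    (hxbdd : ∃ C : ℝ, ∀ t ≥ (0:ℝ), ‖x t‖ ≤ C)
    (hxtraj : ∀ s t : ℝ, 0 ≤ s → s ≤ t → x t = φ (t - s) (x s))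
    (T : ℝ) (hT : 0 < T)
    (hper : Tendsto (fun t => ‖x (t + T) - x t‖) atTop (nhds 0))
    (y : ℝ → EuclideanSpace ℝ (Fin n))
    (hy : ∀ t : ℝ, y t = φ t (y 0))
    (hω : ∃ u : ℕ → ℝ, Tendsto u atTop atTop ∧
      Tendsto (fun k => x (u k)) atTop (nhds (y 0))) :
    ∀ t : ℝ, y (t + T) = y t :=
  stmt_15_general n φ hφcont hφadd x hxtraj T hT hper y hy hω
end
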